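/- Let {x_k}, {τ_k}, {A_k} be generated by the TRFD algorithm, assume each component F_i is convex, h is monotone, f has a global minimizer x* on Ω with D_0 := sup{‖x − x*‖_p : x ∈ Ω, f(x) ≤ f(x_0)} < ∞, and Δ_* ≥ D_0. Then for every iteration k with η_{p,Δ_*}(x_k;A_k) ≥ ε/2 (i.e. k ∉ U¹), one has η_{p,Δ_*}(x_k;A_k) ≥ (f(x_k) − f(x*)) / ((L_J/σ + 1) Δ_*). -/

import Mathlib

/-!
Put `s = x* - x_k`. Since `f(x_k) ≤ f(x_0)` and `Δ_* ≥ D_0`, the step `s` is feasible for the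
model defining `η_{p,Δ_*}(x_k; A_k)`. Convexity of the `F_i` gives `F(x_k) + J(x_k) s ≤ F(x*)`
componentwise, so by monotonicity `h(F(x_k) + J(x_k) s) ≤ f(x*)`. A second-order Taylor bound
gives every column of `A_k - J(x_k)` Euclidean norm at most `L_J τ_k / 2`, so replacing `J(x_k)` by `A_k`
costs at most `L_{h,p} c_{p,2} c_{2,p} √n L_J τ_k Δ_* / 2`, which the choice `τ_k ≤ τ_0` turns
into `(L_J/σ)(ε/2) Δ_* ≤ (L_J/σ) Δ_* η`. Hence `f(x_k) - f(x*) ≤ (1 + L_J/σ) Δ_* η`.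
-/

open scoped ENNReal

noncomputable section

/-- The `p`-norm on `ℝ^n`, for `p ∈ [1,∞]`. -/
def pNorm (p : ℝ≥0∞) {n : ℕ} (x : Fin n → ℝ) : ℝ :=
  if p = ∞ then ⨆ i, |x i| else (∑ i, |x i| ^ p.toReal) ^ (1 / p.toReal)

/-- The Euclidean norm on `ℝ^n`. -/
def eucNorm {n : ℕ} (x : Fin n → ℝ) : ℝ := Real.sqrt (∑ i, x i ^ 2)

/-- The operator norm of a matrix, induced by Euclidean norms. -/
def opNorm2 {m n : ℕ} (A : Matrix (Fin m) (Fin n) ℝ) : ℝ :=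
  sSup ((fun v => eucNorm (A.mulVec v)) '' {v | eucNorm v ≤ 1})

/-- Forward finite-difference approximation of the Jacobian of `F` at `x` with stepsize `τ`:
the `j`-th column is `(F (x + τ e_j) - F x) / τ`. -/
def fdMatrix {n m : ℕ} (F : (Fin n → ℝ) → (Fin m → ℝ)) (x : Fin n → ℝ) (τ : ℝ) :
    Matrix (Fin m) (Fin n) ℝ :=
  Matrix.of fun i j => (F (x + Pi.single j τ) i - F x i) / τ

/-- Stationarity measure `ψ_{p,r}(x)`. -/
def psi {n m : ℕ} (Ω : Set (Fin n → ℝ)) (F : (Fin n → ℝ) → (Fin m → ℝ))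
    (h : (Fin m → ℝ) → ℝ) (J : (Fin n → ℝ) → Matrix (Fin m) (Fin n) ℝ)
    (p : ℝ≥0∞) (r : ℝ) (x : Fin n → ℝ) : ℝ :=
  r⁻¹ * (h (F x) -
    sInf ((fun s => h (F x + (J x).mulVec s)) '' {s | x + s ∈ Ω ∧ pNorm p s ≤ r}))

/-- Approximate stationarity measure `η_{p,r}(x; A)`. -/
def eta {n m : ℕ} (Ω : Set (Fin n → ℝ)) (F : (Fin n → ℝ) → (Fin m → ℝ))
    (h : (Fin m → ℝ) → ℝ) (p : ℝ≥0∞) (r : ℝ) (x : Fin n → ℝ)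
    (A : Matrix (Fin m) (Fin n) ℝ) : ℝ :=
  r⁻¹ * (h (F x) -
    sInf ((fun s => h (F x + A.mulVec s)) '' {s | x + s ∈ Ω ∧ pNorm p s ≤ r}))

/-- The TRFD algorithm: `x`, `τ`, `Δ`, `A`, `d`, `ρ` are the iterates, finite-difference
stepsizes, trust-region radii, finite-difference Jacobian approximations, trial steps and
ratios generated by TRFD with parameters `ε, σ, α, θ, Δstar` from the point `x 0`. -/
def TRFDrun {n m : ℕ} (Ω : Set (Fin n → ℝ)) (F : (Fin n → ℝ) → (Fin m → ℝ))
    (h : (Fin m → ℝ) → ℝ) (p : ℝ≥0∞)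
    (Lh cpm cnp ε σ α θ Δstar : ℝ)
    (x : ℕ → Fin n → ℝ) (τ Δ : ℕ → ℝ) (A : ℕ → Matrix (Fin m) (Fin n) ℝ)
    (d : ℕ → Fin n → ℝ) (ρ : ℕ → ℝ) : Prop :=
  x 0 ∈ Ω ∧
  τ 0 = ε / (Lh * σ * cpm * cnp * Real.sqrt n) ∧
  τ 0 * Real.sqrt n ≤ Δ 0 ∧ Δ 0 ≤ Δstar ∧
  (∀ k, A k = fdMatrix F (x k) (τ k)) ∧
  (∀ k,
    -- unsuccessful iteration of type I
    (eta Ω F h p Δstar (x k) (A k) < ε / 2 ∧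
      x (k + 1) = x k ∧ Δ (k + 1) = Δ k ∧ τ (k + 1) = τ k / 2) ∨
    (ε / 2 ≤ eta Ω F h p Δstar (x k) (A k) ∧
      -- the trial step is feasible and achieves a `θ`-fraction of the optimal model decrease
      pNorm p (d k) ≤ Δ k ∧ x k + d k ∈ Ω ∧
      θ * (h (F (x k)) -
          sInf ((fun s => h (F (x k) + (A k).mulVec s)) ''
            {s | x k + s ∈ Ω ∧ pNorm p s ≤ Δ k})) ≤
        h (F (x k)) - h (F (x k) + (A k).mulVec (d k)) ∧
      ρ k = (h (F (x k)) - h (F (x k + d k))) /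
            (h (F (x k)) - h (F (x k) + (A k).mulVec (d k))) ∧
      -- successful iteration
      ((α ≤ ρ k ∧ x (k + 1) = x k + d k ∧ Δ (k + 1) = min (2 * Δ k) Δstar ∧
          τ (k + 1) = τ k) ∨
      -- unsuccessful iteration of type II
       (ρ k < α ∧ τ k * Real.sqrt n ≤ Δ k / 2 ∧
          x (k + 1) = x k ∧ Δ (k + 1) = Δ k / 2 ∧ τ (k + 1) = τ k) ∨
      -- unsuccessful iteration of type III
       (ρ k < α ∧ Δ k / 2 < τ k * Real.sqrt n ∧
          x (k + 1) = x k ∧ Δ (k + 1) = Δ k / 2 ∧ τ (k + 1) = τ k / 2))))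

open Set
open scoped Matrix

theorem ConvexOn.add_le_of_hasFDerivAt {E : Type*} [NormedAddCommGroup E] [NormedSpace ℝ E]
    {g : E → ℝ} {g' : E →L[ℝ] ℝ} {x : E} (hg : ConvexOn ℝ univ g) (hd : HasFDerivAt g g' x)
    (y : E) : g x + g' (y - x) ≤ g y := by
  have hline : ConvexOn ℝ univ (g ∘ AffineMap.lineMap (k := ℝ) x y) := by
    simpa using hg.comp_affineMap (AffineMap.lineMap x y)
  have hderiv : HasDerivAt (g ∘ AffineMap.lineMap (k := ℝ) x y) (g' (y - x)) 0 := by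
    have := (AffineMap.hasDerivAt_lineMap (a := x) (b := y) (x := (0 : ℝ)))
    exact (hd.comp_hasDerivAt_of_eq (0 : ℝ) this (by simp))
  have := hline.le_slope_of_hasDerivAt (mem_univ 0) (mem_univ 1) one_pos hderiv
  simp only [slope_def_field, Function.comp_apply, AffineMap.lineMap_apply_zero,
    AffineMap.lineMap_apply_one, sub_zero, div_one] at this
  linarith

theorem norm_sub_sub_smul_le_of_norm_deriv_sub_le {E : Type*} [NormedAddCommGroup E]
    [NormedSpace ℝ E] {f f' : ℝ → E} {a b L : ℝ} (hab : a ≤ b)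
    (hf : ∀ t ∈ Icc a b, HasDerivAt f (f' t) t) (hf' : ∀ t ∈ Ico a b, ‖f' t - f' a‖ ≤ L * (t - a)) :
    ‖f b - f a - (b - a) • f' a‖ ≤ L * (b - a) ^ 2 / 2 := by
  have hg : ∀ t ∈ Icc a b, HasDerivAt (fun t => f t - f a - (t - a) • f' a) (f' t - f' a) t :=
    fun t ht => ((hf t ht).sub_const (f a)).sub
      (((hasDerivAt_id t).sub_const a).smul_const (f' a)) |>.congr_deriv (by simp)
  have hB : ∀ t, HasDerivAt (fun t => L * (t - a) ^ 2 / 2) (L * (t - a)) t := by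
    intro t
    have h := ((((hasDerivAt_id' t).sub_const a).pow 2).const_mul L).div_const 2
    simp only [Pi.pow_apply] at h
    exact h.congr_deriv (by ring)
  exact image_norm_le_of_norm_deriv_right_le_deriv_boundary
    (fun t ht => (hg t ht).continuousAt.continuousWithinAt)
    (fun t ht => (hg t (Ico_subset_Icc_self ht)).hasDerivWithinAt) (by simp) hB hf' ⟨hab, le_rfl⟩

lemma eucNorm_eq_norm_toLp {k : ℕ} (v : Fin k → ℝ) :
    eucNorm v = ‖(WithLp.toLp 2 v : EuclideanSpace ℝ (Fin k))‖ := by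
  simp [EuclideanSpace.norm_eq, eucNorm]

lemma sum_abs_le_sqrt_mul_eucNorm {k : ℕ} (s : Fin k → ℝ) :
    ∑ j, |s j| ≤ Real.sqrt k * eucNorm s := by
  have hcs := Finset.sum_mul_sq_le_sq_mul_sq Finset.univ (fun _ => (1 : ℝ)) (fun j => |s j|)
  simp only [one_mul, one_pow, sq_abs, Finset.sum_const, Finset.card_univ, Fintype.card_fin,
    nsmul_eq_mul, mul_one] at hcs
  rw [eucNorm, ← Real.sqrt_mul (Nat.cast_nonneg k)]
  exact Real.le_sqrt_of_sq_le hcs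

section L2Operator

open scoped Matrix.Norms.L2Operator

lemma eucNorm_mulVec_le {m n : ℕ} (A : Matrix (Fin m) (Fin n) ℝ) (v : Fin n → ℝ) :
    eucNorm (A *ᵥ v) ≤ ‖A‖ * eucNorm v := by
  simpa [eucNorm_eq_norm_toLp] using A.l2_opNorm_mulVec (WithLp.toLp 2 v)

lemma eucNorm_mulVec_le_opNorm2 {m n : ℕ} (A : Matrix (Fin m) (Fin n) ℝ) {v : Fin n → ℝ}
    (hv : eucNorm v ≤ 1) : eucNorm (A *ᵥ v) ≤ opNorm2 A := by
  refine le_csSup ⟨‖A‖, ?_⟩ ⟨v, hv, rfl⟩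
  rintro _ ⟨w, hw, rfl⟩
  exact (eucNorm_mulVec_le A w).trans (mul_le_of_le_one_right (norm_nonneg A) hw)

end L2Operator

lemma eucNorm_mulVec_le_of_col_le {m n : ℕ} {B : Matrix (Fin m) (Fin n) ℝ} {c : ℝ} (hc : 0 ≤ c)
    (hB : ∀ j, eucNorm (fun i => B i j) ≤ c) (s : Fin n → ℝ) :
    eucNorm (B *ᵥ s) ≤ c * (Real.sqrt n * eucNorm s) := by
  have hcol : WithLp.toLp 2 (B *ᵥ s) =
      ∑ j, s j • (WithLp.toLp 2 (fun i => B i j) : EuclideanSpace ℝ (Fin m)) := by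
    ext i
    simp [Matrix.mulVec, dotProduct, mul_comm]
  calc eucNorm (B *ᵥ s)
      ≤ ∑ j, |s j| * eucNorm (fun i => B i j) := by
        simp only [eucNorm_eq_norm_toLp, hcol]
        refine (norm_sum_le _ _).trans_eq ?_
        simp [norm_smul]
    _ ≤ ∑ j, |s j| * c := by gcongr with j; exact hB j
    _ = c * ∑ j, |s j| := by rw [← Finset.sum_mul, mul_comm]
    _ ≤ c * (Real.sqrt n * eucNorm s) := by gcongr; exact sum_abs_le_sqrt_mul_eucNorm s

lemma eucNorm_fdMatrix_col_sub_le {n m : ℕ} {F : (Fin n → ℝ) → (Fin m → ℝ)}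
    {J : (Fin n → ℝ) → Matrix (Fin m) (Fin n) ℝ}
    (hJ : ∀ y, HasFDerivAt F (LinearMap.toContinuousLinearMap (Matrix.mulVecLin (J y))) y)
    {LJ : ℝ} (hJLip : ∀ y z, opNorm2 (J y - J z) ≤ LJ * eucNorm (y - z))
    (x : Fin n → ℝ) {τ : ℝ} (hτ : 0 < τ) (j : Fin n) :
    eucNorm (fun i => fdMatrix F x τ i j - J x i j) ≤ LJ * τ / 2 := by
  set e : Fin n → ℝ := Pi.single j 1
  have he : eucNorm e = 1 := by simp [e, eucNorm_eq_norm_toLp]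
  let f : ℝ → EuclideanSpace ℝ (Fin m) := fun t => WithLp.toLp 2 (F (x + t • e))
  let f' : ℝ → EuclideanSpace ℝ (Fin m) := fun t => WithLp.toLp 2 (J (x + t • e) *ᵥ e)
  have hf : ∀ t, HasDerivAt f (f' t) t := by
    intro t
    have hline : HasDerivAt (fun t : ℝ => x + t • e) e t := by
      simpa using ((hasDerivAt_id t).smul_const e).const_add x
    have := (EuclideanSpace.equiv (Fin m) ℝ).symm.hasFDerivAt.comp_hasDerivAt t
      ((hJ (x + t • e)).comp_hasDerivAt t hline)
    exact this
  have hf' : ∀ t ∈ Ico 0 τ, ‖f' t - f' 0‖ ≤ LJ * (t - 0) := by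
    rintro t ⟨ht, -⟩
    have hdist : eucNorm (x + t • e - x) = t := by
      simp [eucNorm_eq_norm_toLp, norm_smul, abs_of_nonneg ht, e]
    have hLip := hJLip (x + t • e) x
    rw [hdist] at hLip
    calc ‖f' t - f' 0‖ = eucNorm ((J (x + t • e) - J x) *ᵥ e) := by
          simp [f', eucNorm_eq_norm_toLp, Matrix.sub_mulVec]
      _ ≤ opNorm2 (J (x + t • e) - J x) := eucNorm_mulVec_le_opNorm2 _ he.le
      _ ≤ LJ * (t - 0) := by rwa [sub_zero]
  have htaylor := norm_sub_sub_smul_le_of_norm_deriv_sub_le hτ.le (fun t _ => hf t) hf'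
  have hcol : WithLp.toLp 2 (fun i => fdMatrix F x τ i j - J x i j) =
      τ⁻¹ • (f τ - f 0 - (τ - 0) • f' 0) := by
    ext i
    simp only [f, f', e, fdMatrix, PiLp.smul_apply, PiLp.sub_apply, Matrix.of_apply, sub_zero,
      Matrix.mulVec_single_one, smul_eq_mul, ← Pi.single_smul, mul_one, Pi.single_zero,
      add_zero, Matrix.col_apply]
    field_simp
  rw [eucNorm_eq_norm_toLp, hcol, norm_smul, Real.norm_eq_abs, abs_inv, abs_of_pos hτ]
  calc τ⁻¹ * ‖f τ - f 0 - (τ - 0) • f' 0‖ ≤ τ⁻¹ * (LJ * (τ - 0) ^ 2 / 2) := by gcongr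
    _ = LJ * τ / 2 := by field_simp; ring

lemma pNorm_zero {k : ℕ} {p : ℝ≥0∞} (hp : p ≠ 0) : pNorm p (0 : Fin k → ℝ) = 0 := by
  unfold pNorm
  split_ifs with hpi
  · simp
  · have hpos : 0 < p.toReal := ENNReal.toReal_pos hp hpi
    simp [Real.zero_rpow hpos.ne', Real.zero_rpow (inv_pos.2 hpos).ne']

lemma pNorm_neg {k : ℕ} (p : ℝ≥0∞) (v : Fin k → ℝ) : pNorm p (-v) = pNorm p v := by
  simp [pNorm]

lemma pNorm_sub_comm {k : ℕ} (p : ℝ≥0∞) (v w : Fin k → ℝ) : pNorm p (v - w) = pNorm p (w - v) := by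
  rw [← neg_sub, pNorm_neg]

def modelValues {n m : ℕ} (Ω : Set (Fin n → ℝ)) (F : (Fin n → ℝ) → (Fin m → ℝ))
    (h : (Fin m → ℝ) → ℝ) (p : ℝ≥0∞) (r : ℝ) (x : Fin n → ℝ)
    (A : Matrix (Fin m) (Fin n) ℝ) : Set ℝ :=
  (fun s => h (F x + A *ᵥ s)) '' {s | x + s ∈ Ω ∧ pNorm p s ≤ r}

def modelMin {n m : ℕ} (Ω : Set (Fin n → ℝ)) (F : (Fin n → ℝ) → (Fin m → ℝ))
    (h : (Fin m → ℝ) → ℝ) (p : ℝ≥0∞) (r : ℝ) (x : Fin n → ℝ)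
    (A : Matrix (Fin m) (Fin n) ℝ) : ℝ :=
  sInf (modelValues Ω F h p r x A)

lemma eta_eq {n m : ℕ} (Ω : Set (Fin n → ℝ)) (F : (Fin n → ℝ) → (Fin m → ℝ))
    (h : (Fin m → ℝ) → ℝ) (p : ℝ≥0∞) (r : ℝ) (x : Fin n → ℝ)
    (A : Matrix (Fin m) (Fin n) ℝ) :
    eta Ω F h p r x A = r⁻¹ * (h (F x) - modelMin Ω F h p r x A) := rfl

section Model

variable {n m : ℕ} {Ω : Set (Fin n → ℝ)} {F : (Fin n → ℝ) → (Fin m → ℝ)}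
  {h : (Fin m → ℝ) → ℝ} {p : ℝ≥0∞} {Lh cnp cpm r : ℝ} {x : Fin n → ℝ}
  {A : Matrix (Fin m) (Fin n) ℝ}

lemma model_le_of_lipschitz (hhLip : ∀ z w, |h z - h w| ≤ Lh * pNorm p (z - w))
    (y : Fin m → ℝ) (A B : Matrix (Fin m) (Fin n) ℝ) (s : Fin n → ℝ) :
    h (y + A *ᵥ s) ≤ h (y + B *ᵥ s) + Lh * pNorm p ((A - B) *ᵥ s) := by
  have := (abs_le.1 (hhLip (y + A *ᵥ s) (y + B *ᵥ s))).2
  rw [add_sub_add_left_eq_sub, ← Matrix.sub_mulVec] at this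
  linarith

lemma bddBelow_model (hLh : 0 ≤ Lh) (hcnp0 : 0 ≤ cnp) (hcpm0 : 0 ≤ cpm)
    (hhLip : ∀ z w, |h z - h w| ≤ Lh * pNorm p (z - w))
    (hcnp : ∀ v : Fin n → ℝ, eucNorm v ≤ cnp * pNorm p v)
    (hcpm : ∀ z : Fin m → ℝ, pNorm p z ≤ cpm * eucNorm z)
    (x : Fin n → ℝ) (A : Matrix (Fin m) (Fin n) ℝ) (r : ℝ) :
    BddBelow (modelValues Ω F h p r x A) := by
  open scoped Matrix.Norms.L2Operator in
  refine ⟨h (F x) - Lh * (cpm * (‖A‖ * (cnp * r))), ?_⟩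
  rintro _ ⟨s, ⟨-, hs⟩, rfl⟩
  have hAs : pNorm p (A *ᵥ s) ≤ cpm * (‖A‖ * (cnp * r)) :=
    calc pNorm p (A *ᵥ s) ≤ cpm * eucNorm (A *ᵥ s) := hcpm _
      _ ≤ cpm * (‖A‖ * eucNorm s) := by gcongr; exact eucNorm_mulVec_le A s
      _ ≤ cpm * (‖A‖ * (cnp * r)) := by gcongr; exact (hcnp s).trans (by gcongr)
  have := model_le_of_lipschitz hhLip (F x) 0 A s
  simp only [Matrix.zero_mulVec, add_zero, zero_sub, Matrix.neg_mulVec, pNorm_neg] at this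
  linarith [mul_le_mul_of_nonneg_left hAs hLh]

lemma modelMin_le (hbdd : BddBelow (modelValues Ω F h p r x A))
    {s : Fin n → ℝ} (hs : x + s ∈ Ω) (hsr : pNorm p s ≤ r) :
    modelMin Ω F h p r x A ≤ h (F x + A *ᵥ s) :=
  csInf_le hbdd ⟨s, ⟨hs, hsr⟩, rfl⟩

lemma modelMin_le_self (hbdd : BddBelow (modelValues Ω F h p r x A))
    (hp : p ≠ 0) (hx : x ∈ Ω) (hr : 0 ≤ r) : modelMin Ω F h p r x A ≤ h (F x) := by
  simpa using modelMin_le hbdd (s := 0) (by simpa using hx) (by rwa [pNorm_zero hp])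

end Model

lemma comp_linearization_le {n m : ℕ} {F : (Fin n → ℝ) → (Fin m → ℝ)}
    {J : (Fin n → ℝ) → Matrix (Fin m) (Fin n) ℝ} {h : (Fin m → ℝ) → ℝ}
    (hJ : ∀ y, HasFDerivAt F (LinearMap.toContinuousLinearMap (Matrix.mulVecLin (J y))) y)
    (hFconv : ∀ i, ConvexOn ℝ univ (fun y => F y i))
    (hmono : ∀ u v : Fin m → ℝ, (∀ i, u i ≤ v i) → h u ≤ h v) (x y : Fin n → ℝ) :
    h (F x + J x *ᵥ (y - x)) ≤ h (F y) :=
  hmono _ _ fun i => by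
    simpa using (hFconv i).add_le_of_hasFDerivAt (hasFDerivAt_pi'.1 (hJ x) i) y

theorem sub_le_mul_eta_add {n m : ℕ} {Ω : Set (Fin n → ℝ)} {F : (Fin n → ℝ) → (Fin m → ℝ)}
    {J : (Fin n → ℝ) → Matrix (Fin m) (Fin n) ℝ} {h : (Fin m → ℝ) → ℝ} {p : ℝ≥0∞}
    {Lh cnp cpm r c : ℝ}
    (hJ : ∀ y, HasFDerivAt F (LinearMap.toContinuousLinearMap (Matrix.mulVecLin (J y))) y)
    (hFconv : ∀ i, ConvexOn ℝ univ (fun y => F y i))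
    (hmono : ∀ u v : Fin m → ℝ, (∀ i, u i ≤ v i) → h u ≤ h v)
    (hLh : 0 ≤ Lh) (hcnp0 : 0 ≤ cnp) (hcpm0 : 0 ≤ cpm)
    (hhLip : ∀ z w, |h z - h w| ≤ Lh * pNorm p (z - w))
    (hcnp : ∀ v : Fin n → ℝ, eucNorm v ≤ cnp * pNorm p v)
    (hcpm : ∀ z : Fin m → ℝ, pNorm p z ≤ cpm * eucNorm z)
    {x xstar : Fin n → ℝ} (hxstar : xstar ∈ Ω) (hr : 0 < r)
    (hdist : pNorm p (xstar - x) ≤ r) {A : Matrix (Fin m) (Fin n) ℝ} (hc : 0 ≤ c)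
    (hA : ∀ j, eucNorm (fun i => (A - J x) i j) ≤ c) :
    h (F x) - h (F xstar) ≤
      r * eta Ω F h p r x A + Lh * (cpm * (c * (Real.sqrt n * (cnp * r)))) := by
  set s := xstar - x
  have hmodel : modelMin Ω F h p r x A ≤ h (F x + A *ᵥ s) :=
    modelMin_le (bddBelow_model hLh hcnp0 hcpm0 hhLip hcnp hcpm x A r) (by simpa [s]) hdist
  have herr : pNorm p ((A - J x) *ᵥ s) ≤ cpm * (c * (Real.sqrt n * (cnp * r))) :=
    calc pNorm p ((A - J x) *ᵥ s) ≤ cpm * eucNorm ((A - J x) *ᵥ s) := hcpm _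
      _ ≤ cpm * (c * (Real.sqrt n * eucNorm s)) := by
        gcongr; exact eucNorm_mulVec_le_of_col_le hc hA s
      _ ≤ cpm * (c * (Real.sqrt n * (cnp * r))) := by
        gcongr; exact (hcnp s).trans (by gcongr)
  have hlin : h (F x + A *ᵥ s) ≤ h (F xstar) + Lh * pNorm p ((A - J x) *ᵥ s) :=
    (model_le_of_lipschitz hhLip _ A (J x) s).trans
      (by gcongr; exact comp_linearization_le hJ hFconv hmono x xstar)
  have hη : r * eta Ω F h p r x A = h (F x) - modelMin Ω F h p r x A := by
    rw [eta_eq, ← mul_assoc, mul_inv_cancel₀ hr.ne', one_mul]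
  rw [hη]
  linarith [mul_le_mul_of_nonneg_left herr hLh]

namespace TRFDrun

variable {n m : ℕ} {Ω : Set (Fin n → ℝ)} {F : (Fin n → ℝ) → (Fin m → ℝ)}
  {h : (Fin m → ℝ) → ℝ} {p : ℝ≥0∞} {Lh cpm cnp ε σ α θ Δstar : ℝ}
  {x : ℕ → Fin n → ℝ} {τ Δ : ℕ → ℝ} {A : ℕ → Matrix (Fin m) (Fin n) ℝ}
  {d : ℕ → Fin n → ℝ} {ρ : ℕ → ℝ}

lemma tau_zero_pos (hrun : TRFDrun Ω F h p Lh cpm cnp ε σ α θ Δstar x τ Δ A d ρ)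
    (hn : 1 ≤ n) (hε : 0 < ε) (hLh : 0 < Lh) (hσ : 0 < σ) (hcpm : 0 < cpm) (hcnp : 0 < cnp) :
    0 < τ 0 := by
  have : 0 < Real.sqrt n := Real.sqrt_pos.2 (by exact_mod_cast hn)
  rw [hrun.2.1]
  positivity

lemma deltaStar_pos (hrun : TRFDrun Ω F h p Lh cpm cnp ε σ α θ Δstar x τ Δ A d ρ)
    (hn : 1 ≤ n) (hτ0 : 0 < τ 0) : 0 < Δstar :=
  ((mul_pos hτ0 (Real.sqrt_pos.2 (by exact_mod_cast hn))).trans_le hrun.2.2.1).trans_le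
    hrun.2.2.2.1

lemma tau_succ (hrun : TRFDrun Ω F h p Lh cpm cnp ε σ α θ Δstar x τ Δ A d ρ) (k : ℕ) :
    τ (k + 1) = τ k ∨ τ (k + 1) = τ k / 2 := by
  rcases hrun.2.2.2.2.2 k with ⟨-, -, -, h1⟩ | ⟨-, -, -, -, -, ⟨-, -, -, h1⟩ | ⟨-, -, -, -, h1⟩ |
    ⟨-, -, -, -, h1⟩⟩ <;> simp [h1]

lemma tau_pos_le (hrun : TRFDrun Ω F h p Lh cpm cnp ε σ α θ Δstar x τ Δ A d ρ)
    (hτ0 : 0 < τ 0) (k : ℕ) : 0 < τ k ∧ τ k ≤ τ 0 := by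
  induction k with
  | zero => exact ⟨hτ0, le_rfl⟩
  | succ k ih => rcases hrun.tau_succ k with h1 | h1 <;> rw [h1] <;> constructor <;> linarith

lemma delta_nonneg (hrun : TRFDrun Ω F h p Lh cpm cnp ε σ α θ Δstar x τ Δ A d ρ)
    (hτ0 : 0 ≤ τ 0) (k : ℕ) : 0 ≤ Δ k := by
  have hΔ0 : 0 ≤ Δ 0 := (mul_nonneg hτ0 (Real.sqrt_nonneg _)).trans hrun.2.2.1
  have hΔstar : 0 ≤ Δstar := hΔ0.trans hrun.2.2.2.1
  induction k with
  | zero => exact hΔ0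
  | succ k ih =>
    rcases hrun.2.2.2.2.2 k with ⟨-, -, h1, -⟩ | ⟨-, -, -, -, -, ⟨-, -, h1, -⟩ | ⟨-, -, -, h1, -⟩ |
      ⟨-, -, -, h1, -⟩⟩ <;> rw [h1]
    · exact ih
    · exact le_min (by linarith) hΔstar
    all_goals linarith

lemma mem_descent (hrun : TRFDrun Ω F h p Lh cpm cnp ε σ α θ Δstar x τ Δ A d ρ)
    (hα : 0 < α) (hθ : 0 ≤ θ) (hτ0 : 0 ≤ τ 0)
    (hmodel : ∀ y ∈ Ω, ∀ (B : Matrix (Fin m) (Fin n) ℝ) (r : ℝ), 0 ≤ r →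
      modelMin Ω F h p r y B ≤ h (F y)) (k : ℕ) :
    x k ∈ Ω ∧ h (F (x k)) ≤ h (F (x 0)) := by
  induction k with
  | zero => exact ⟨hrun.1, le_rfl⟩
  | succ k ih =>
    rcases hrun.2.2.2.2.2 k with ⟨-, hx, -⟩ | ⟨-, -, hmem, hdec, hρ, ⟨hαρ, hx, -⟩ | ⟨-, -, hx, -⟩ |
      ⟨-, -, hx, -⟩⟩
    · rwa [hx]
    · rw [hx]
      refine ⟨hmem, le_trans ?_ ih.2⟩
      have hpred : 0 ≤ h (F (x k)) - h (F (x k) + A k *ᵥ d k) :=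
        (mul_nonneg hθ (sub_nonneg.2 (hmodel _ ih.1 (A k) (Δ k)
          (hrun.delta_nonneg hτ0 k)))).trans hdec
      -- a vanishing predicted decrease would make `ρ k = 0` (division by zero)
      have hρpos : 0 < ρ k := hα.trans_le hαρ
      rw [hρ] at hρpos
      rcases div_pos_iff.1 hρpos with ⟨hnum, -⟩ | ⟨-, hden⟩
      · linarith
      · linarith
    · rwa [hx]
    · rwa [hx]

lemma fd_error_le (hrun : TRFDrun Ω F h p Lh cpm cnp ε σ α θ Δstar x τ Δ A d ρ)
    (hn : 1 ≤ n) (hLh : 0 < Lh) (hσ : 0 < σ) (hcpm : 0 < cpm) (hcnp : 0 < cnp) {LJ r : ℝ}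
    (hLJ : 0 ≤ LJ) (hr : 0 ≤ r) {k : ℕ} (hτk0 : τ k ≤ τ 0) :
    Lh * (cpm * (LJ * τ k / 2 * (Real.sqrt n * (cnp * r)))) ≤ LJ / σ * r * (ε / 2) := by
  have hscale : 0 < Lh * σ * cpm * cnp * Real.sqrt n := by
    have : 0 < Real.sqrt n := Real.sqrt_pos.2 (by exact_mod_cast hn)
    positivity
  have hτε : τ k * (Lh * σ * cpm * cnp * Real.sqrt n) ≤ ε :=
    calc τ k * (Lh * σ * cpm * cnp * Real.sqrt n)
        ≤ τ 0 * (Lh * σ * cpm * cnp * Real.sqrt n) := by gcongr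
      _ = ε := by rw [hrun.2.1, div_mul_cancel₀ _ hscale.ne']
  calc Lh * (cpm * (LJ * τ k / 2 * (Real.sqrt n * (cnp * r))))
      = LJ / (2 * σ) * r * (τ k * (Lh * σ * cpm * cnp * Real.sqrt n)) := by field_simp
    _ ≤ LJ / (2 * σ) * r * ε := by gcongr
    _ = LJ / σ * r * (ε / 2) := by ring

end TRFDrun

theorem stmt15_general
    {n m : ℕ} (hn : 1 ≤ n) (p : ℝ≥0∞) (hp : 1 ≤ p)
    (Ω : Set (Fin n → ℝ))
    (F : (Fin n → ℝ) → (Fin m → ℝ)) (J : (Fin n → ℝ) → Matrix (Fin m) (Fin n) ℝ)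
    (hJ : ∀ y, HasFDerivAt F (LinearMap.toContinuousLinearMap (Matrix.mulVecLin (J y))) y)
    (LJ : ℝ) (hLJ : 0 < LJ)
    (hJLip : ∀ y z, opNorm2 (J y - J z) ≤ LJ * eucNorm (y - z))
    (h : (Fin m → ℝ) → ℝ)
    (Lh : ℝ) (hLh : 0 < Lh)
    (hhLip : ∀ z w, |h z - h w| ≤ Lh * pNorm p (z - w))
    (cnp cpm : ℝ) (hcnp1 : 1 ≤ cnp) (hcpm1 : 1 ≤ cpm)
    (hcnp : ∀ v : Fin n → ℝ, eucNorm v ≤ cnp * pNorm p v)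
    (hcpm : ∀ z : Fin m → ℝ, pNorm p z ≤ cpm * eucNorm z)
    (ε σ α θ Δstar : ℝ) (hε : 0 < ε) (hσ : 0 < σ)
    (hα0 : 0 < α) (hθ0 : 0 < θ)
    (x : ℕ → Fin n → ℝ) (τ Δ : ℕ → ℝ) (A : ℕ → Matrix (Fin m) (Fin n) ℝ)
    (d : ℕ → Fin n → ℝ) (ρ : ℕ → ℝ)
    (hrun : TRFDrun Ω F h p Lh cpm cnp ε σ α θ Δstar x τ Δ A d ρ)
    (hFconv : ∀ i, ConvexOn ℝ Set.univ (fun y => F y i))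
    (hmono : ∀ u v : Fin m → ℝ, (∀ i, u i ≤ v i) → h u ≤ h v)
    (xstar : Fin n → ℝ) (hxstarΩ : xstar ∈ Ω)
    (D₀ : ℝ) (hD₀ : ∀ y ∈ Ω, h (F y) ≤ h (F (x 0)) → pNorm p (y - xstar) ≤ D₀)
    (hΔstarD₀ : D₀ ≤ Δstar)
    :
    ∀ k : ℕ, ε / 2 ≤ eta Ω F h p Δstar (x k) (A k) →
      (h (F (x k)) - h (F xstar)) / ((LJ / σ + 1) * Δstar) ≤
        eta Ω F h p Δstar (x k) (A k) := by
  intro k hη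
  have hcnp0 : 0 < cnp := one_pos.trans_le hcnp1
  have hcpm0 : 0 < cpm := one_pos.trans_le hcpm1
  have hτ0 := hrun.tau_zero_pos hn hε hLh hσ hcpm0 hcnp0
  have hΔstar := hrun.deltaStar_pos hn hτ0
  obtain ⟨hτk, hτk0⟩ := hrun.tau_pos_le hτ0 k
  obtain ⟨hxk, hdesc⟩ := hrun.mem_descent hα0 hθ0.le hτ0.le
    (fun y hy B r hr => modelMin_le_self
      (bddBelow_model hLh.le hcnp0.le hcpm0.le hhLip hcnp hcpm y B r)
      (one_pos.trans_le hp).ne' hy hr) k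
  have hdist : pNorm p (xstar - x k) ≤ Δstar := by
    rw [pNorm_sub_comm]
    exact (hD₀ _ hxk hdesc).trans hΔstarD₀
  have hcol : ∀ j, eucNorm (fun i => (A k - J (x k)) i j) ≤ LJ * τ k / 2 := fun j => by
    simpa [hrun.2.2.2.2.1 k] using eucNorm_fdMatrix_col_sub_le hJ hJLip (x k) hτk j
  have hres := sub_le_mul_eta_add hJ hFconv hmono hLh.le hcnp0.le hcpm0.le hhLip hcnp hcpm
    hxstarΩ hΔstar hdist (by positivity) hcol
  have hfd := hrun.fd_error_le hn hLh hσ hcpm0 hcnp0 hLJ.le hΔstar.le hτk0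
  have hη' := mul_le_mul_of_nonneg_left hη (by positivity : 0 ≤ LJ / σ * Δstar)
  rw [div_le_iff₀ (by positivity)]
  linarith

/-- Lemma 3.10: η bounds the scaled functional residual on non-U¹ iterations. -/
theorem stmt15
    {n m : ℕ} (hn : 1 ≤ n) (hm : 1 ≤ m) (p : ℝ≥0∞) (hp : 1 ≤ p)
    (Ω : Set (Fin n → ℝ)) (hΩne : Ω.Nonempty) (hΩcl : IsClosed Ω) (hΩcv : Convex ℝ Ω)
    (F : (Fin n → ℝ) → (Fin m → ℝ)) (J : (Fin n → ℝ) → Matrix (Fin m) (Fin n) ℝ)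
    (hJ : ∀ y, HasFDerivAt F (LinearMap.toContinuousLinearMap (Matrix.mulVecLin (J y))) y)
    (LJ : ℝ) (hLJ : 0 < LJ)
    (hJLip : ∀ y z, opNorm2 (J y - J z) ≤ LJ * eucNorm (y - z))
    (h : (Fin m → ℝ) → ℝ) (hconv : ConvexOn ℝ Set.univ h)
    (Lh : ℝ) (hLh : 0 < Lh)
    (hhLip : ∀ z w, |h z - h w| ≤ Lh * pNorm p (z - w))
    (cnp cpm : ℝ) (hcnp1 : 1 ≤ cnp) (hcpm1 : 1 ≤ cpm)
    (hcnp : ∀ v : Fin n → ℝ, eucNorm v ≤ cnp * pNorm p v)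
    (hcpm : ∀ z : Fin m → ℝ, pNorm p z ≤ cpm * eucNorm z)
    (ε σ α θ Δstar : ℝ) (hε : 0 < ε) (hσ : 0 < σ)
    (hα0 : 0 < α) (hα1 : α < 1) (hθ0 : 0 < θ) (hθ1 : θ ≤ 1)
    (x : ℕ → Fin n → ℝ) (τ Δ : ℕ → ℝ) (A : ℕ → Matrix (Fin m) (Fin n) ℝ)
    (d : ℕ → Fin n → ℝ) (ρ : ℕ → ℝ)
    (hrun : TRFDrun Ω F h p Lh cpm cnp ε σ α θ Δstar x τ Δ A d ρ)
    (hFconv : ∀ i, ConvexOn ℝ Set.univ (fun y => F y i))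
    (hmono : ∀ u v : Fin m → ℝ, (∀ i, u i ≤ v i) → h u ≤ h v)
    (xstar : Fin n → ℝ) (hxstarΩ : xstar ∈ Ω)
    (hxstarmin : ∀ y ∈ Ω, h (F xstar) ≤ h (F y))
    (D₀ : ℝ) (hD₀ : ∀ y ∈ Ω, h (F y) ≤ h (F (x 0)) → pNorm p (y - xstar) ≤ D₀)
    (hΔstarD₀ : D₀ ≤ Δstar)
    :
    ∀ k : ℕ, ε / 2 ≤ eta Ω F h p Δstar (x k) (A k) →
      (h (F (x k)) - h (F xstar)) / ((LJ / σ + 1) * Δstar) ≤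
        eta Ω F h p Δstar (x k) (A k) :=
  stmt15_general hn p hp Ω F J hJ LJ hLJ hJLip h Lh hLh hhLip cnp cpm hcnp1 hcpm1 hcnp hcpm ε σ α θ
    Δstar hε hσ hα0 hθ0 x τ Δ A d ρ hrun hFconv hmono xstar hxstarΩ D₀ hD₀ hΔstarD₀
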